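/- Let m, n ∈ ℕ, α, β > 0, σ > 1. For every y ∈ ℝ₊^n, the weight function ω(σ, y) := ‖y‖_β^{−σ} ∫_{ℝ₊^m} (coth(‖x‖_α/‖y‖_β) − 1) ‖x‖_α^{σ−m} dx equals the constant K₂(σ) := (Γ(1/α)^m/(α^{m−1} Γ(m/α))) · (Γ(σ)/2^{σ−1}) · ζ(σ); in particular it is independent of y. -/

import Mathlib

open MeasureTheory Real Set

noncomputable def cothR (v : ℝ) : ℝ := (Real.exp v + Real.exp (-v)) / (Real.exp v - Real.exp (-v))
noncomputable def zetaR (σ : ℝ) : ℝ := ∑' k : ℕ+, (k : ℝ) ^ (-σ)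
noncomputable def pnorm {s : ℕ} (γ : ℝ) (x : Fin s → ℝ) : ℝ := (∑ i, |x i| ^ γ) ^ (1 / γ)

/-!
The integrand depends on `x` only through `‖x‖_α`, so the weight reduces to a one-dimensional
integral by polar coordinates for the quasi-norm `‖·‖_α` on the positive orthant: by homogeneity,
`‖·‖_α` pushes Lebesgue measure on the orthant forward to `V • d(r ^ m)` on `(0, ∞)`, `V` being
the volume of the unit orthant ball. Testing this against `exp (-r ^ α)`, whose orthant integral
splits into `m` one-dimensional Gamma integrals, gives `m V = Γ(1/α)^m / (α^(m-1) Γ(m/α))`.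
The scaling `r = ‖y‖_β t` turns the radial integral into `‖y‖_β ^ σ ∫₀^∞ t^(σ-1) (coth t - 1) dt`,
and expanding `coth t - 1 = 2 ∑_{k ≥ 1} e^(-2kt)` and integrating termwise gives
`Γ(σ) ζ(σ) / 2^(σ-1)`.
-/

section pnorm

variable {m : ℕ} {γ : ℝ}

lemma pnorm_nonneg (x : Fin m → ℝ) : 0 ≤ pnorm γ x :=
  rpow_nonneg (Finset.sum_nonneg fun _ _ => rpow_nonneg (abs_nonneg _) _) _

lemma pnorm_pos {x : Fin m → ℝ} (hx : x ≠ 0) : 0 < pnorm γ x := by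
  obtain ⟨i, hi⟩ := Function.ne_iff.1 hx
  refine rpow_pos_of_pos (Finset.sum_pos' (fun _ _ => rpow_nonneg (abs_nonneg _) _)
    ⟨i, Finset.mem_univ _, rpow_pos_of_pos (abs_pos.2 hi) _⟩) _

lemma pnorm_rpow_self (hγ : γ ≠ 0) (x : Fin m → ℝ) : pnorm γ x ^ γ = ∑ i, |x i| ^ γ := by
  rw [pnorm, ← rpow_mul (Finset.sum_nonneg fun _ _ => rpow_nonneg (abs_nonneg _) _),
    one_div_mul_cancel hγ, rpow_one]

lemma pnorm_smul (hγ : γ ≠ 0) {r : ℝ} (hr : 0 ≤ r) (x : Fin m → ℝ) :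
    pnorm γ (r • x) = r * pnorm γ x := by
  simp only [pnorm, Pi.smul_apply, smul_eq_mul, abs_mul, abs_of_nonneg hr,
    mul_rpow hr (abs_nonneg _), ← Finset.mul_sum]
  rw [mul_rpow (rpow_nonneg hr _) (Finset.sum_nonneg fun _ _ => rpow_nonneg (abs_nonneg _) _),
    ← rpow_mul hr, mul_one_div_cancel hγ, rpow_one]

lemma abs_le_pnorm (hγ : 0 < γ) (x : Fin m → ℝ) (i : Fin m) : |x i| ≤ pnorm γ x := by
  calc |x i| = (|x i| ^ γ) ^ (1 / γ) := by
        rw [← rpow_mul (abs_nonneg _), mul_one_div_cancel hγ.ne', rpow_one]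
    _ ≤ pnorm γ x := rpow_le_rpow (rpow_nonneg (abs_nonneg _) _)
        (Finset.single_le_sum (fun j _ => rpow_nonneg (abs_nonneg (x j)) γ) (Finset.mem_univ i))
        (by positivity)

@[fun_prop]
lemma measurable_pnorm : Measurable (pnorm γ : (Fin m → ℝ) → ℝ) := by
  unfold pnorm; fun_prop

end pnorm

def posOrthant (m : ℕ) : Set (Fin m → ℝ) := {x | ∀ i, 0 < x i}

lemma posOrthant_eq_pi (m : ℕ) : posOrthant m = univ.pi fun _ => Ioi 0 := by
  ext x; simp [posOrthant]

lemma measurableSet_posOrthant (m : ℕ) : MeasurableSet (posOrthant m) := by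
  rw [posOrthant_eq_pi]; exact .univ_pi fun _ => measurableSet_Ioi

def orthantBall (m : ℕ) (α r : ℝ) : Set (Fin m → ℝ) := posOrthant m ∩ pnorm α ⁻¹' Iic r

noncomputable def radialMeasure (m : ℕ) : Measure ℝ :=
  (volume.restrict (Ioi 0)).withDensity fun r => ENNReal.ofReal (m * r ^ ((m : ℝ) - 1))

section orthant

open scoped Pointwise

variable {m : ℕ} {α : ℝ}

lemma measurableSet_orthantBall (r : ℝ) : MeasurableSet (orthantBall m α r) :=
  (measurableSet_posOrthant m).inter (measurable_pnorm measurableSet_Iic)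

lemma orthantBall_eq_smul (hα : α ≠ 0) {r : ℝ} (hr : 0 < r) :
    orthantBall m α r = r • orthantBall m α 1 := by
  ext x
  rw [mem_smul_set_iff_inv_smul_mem₀ hr.ne']
  simp only [orthantBall, posOrthant, mem_inter_iff, mem_ofPred_eq, mem_preimage, mem_Iic,
    Pi.smul_apply, smul_eq_mul, pnorm_smul hα (inv_nonneg.2 hr.le), inv_mul_le_iff₀ hr, mul_one]
  simp [hr]

lemma orthantBall_eq_empty (hm : 0 < m) {r : ℝ} (hr : r ≤ 0) : orthantBall m α r = ∅ := by
  refine eq_empty_of_forall_notMem fun x ⟨hx, hxr⟩ => ?_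
  have hx0 : x ≠ 0 := fun h => (hx ⟨0, hm⟩).ne' (congrFun h _)
  exact (pnorm_pos hx0).not_ge (le_trans hxr hr)

lemma volume_orthantBall (hm : 0 < m) (hα : α ≠ 0) (r : ℝ) :
    volume (orthantBall m α r) = ENNReal.ofReal r ^ m * volume (orthantBall m α 1) := by
  rcases le_or_gt r 0 with hr | hr
  · rw [orthantBall_eq_empty hm hr, ENNReal.ofReal_of_nonpos hr, zero_pow hm.ne', zero_mul,
      measure_empty]
  · rw [orthantBall_eq_smul hα hr, Measure.addHaar_smul, Module.finrank_fin_fun,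
      abs_of_nonneg (pow_nonneg hr.le m), ENNReal.ofReal_pow hr.le]

lemma volume_orthantBall_lt_top (hα : 0 < α) (r : ℝ) : volume (orthantBall m α r) < ⊤ := by
  refine ((Metric.isBounded_closedBall (x := 0) (r := r)).subset ?_).measure_lt_top
  rintro x ⟨-, hxr⟩
  rw [mem_closedBall_zero_iff, pi_norm_le_iff_of_nonneg ((pnorm_nonneg x).trans hxr)]
  exact fun i => (abs_le_pnorm hα x i).trans hxr

lemma orthantBall_mono {a b : ℝ} (hab : a ≤ b) : orthantBall m α a ⊆ orthantBall m α b :=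
  inter_subset_inter_right _ (preimage_mono (Iic_subset_Iic.2 hab))

lemma volume_posOrthant_inter_pnorm_preimage_Ioc (hm : 0 < m) (hα : 0 < α) {a b : ℝ}
    (hab : a ≤ b) :
    volume (posOrthant m ∩ pnorm α ⁻¹' Ioc a b) =
      volume (orthantBall m α 1) * (ENNReal.ofReal b ^ m - ENNReal.ofReal a ^ m) := by
  have hdiff : posOrthant m ∩ pnorm α ⁻¹' Ioc a b = orthantBall m α b \ orthantBall m α a := by
    ext x
    simp only [orthantBall, mem_inter_iff, mem_sdiff, mem_preimage, mem_Ioc, mem_Iic, not_and,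
      not_le]
    tauto
  rw [hdiff, measure_sdiff (orthantBall_mono hab)
      (measurableSet_orthantBall a).nullMeasurableSet (volume_orthantBall_lt_top hα a).ne,
    volume_orthantBall hm hα.ne' b, volume_orthantBall hm hα.ne' a, ← ENNReal.sub_mul
      (fun _ _ => (volume_orthantBall_lt_top hα 1).ne), mul_comm]

lemma radialMeasure_Ioc (hm : 0 < m) {a b : ℝ} (hab : a ≤ b) :
    radialMeasure m (Ioc a b) = ENNReal.ofReal b ^ m - ENNReal.ofReal a ^ m := by
  set a' := max a 0
  set b' := max b 0
  have ha' : 0 ≤ a' := le_max_right a 0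
  have hab' : a' ≤ b' := max_le_max_right 0 hab
  have hset : Ioc a b ∩ Ioi 0 = Ioc a' b' := by
    ext r; simp only [a', b', mem_inter_iff, mem_Ioc, mem_Ioi, max_lt_iff, le_max_iff]
    grind
  have hm' : (-1 : ℝ) < m - 1 := by have : (0 : ℝ) < m := Nat.cast_pos.2 hm; linarith
  have hint : IntegrableOn (fun r : ℝ => m * r ^ ((m : ℝ) - 1)) (Ioc a' b') :=
    (intervalIntegrable_iff_integrableOn_Ioc_of_le hab').1
      ((intervalIntegral.intervalIntegrable_rpow' hm').const_mul _)
  have hofReal : ∀ c : ℝ, ENNReal.ofReal c ^ m = ENNReal.ofReal (max c 0 ^ (m : ℝ)) := fun c => by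
    rw [rpow_natCast, ENNReal.ofReal_pow (le_max_right c 0), ENNReal.ofReal_max,
      ENNReal.ofReal_zero, max_eq_left zero_le]
  rw [radialMeasure, withDensity_apply _ measurableSet_Ioc,
    Measure.restrict_restrict measurableSet_Ioc, hset,
    ← ofReal_integral_eq_lintegral_ofReal hint ?_, hofReal, hofReal,
    ← ENNReal.ofReal_sub _ (by positivity), ← intervalIntegral.integral_of_le hab',
    intervalIntegral.integral_const_mul, integral_rpow (Or.inl hm'), sub_add_cancel,
    mul_div_cancel₀ _ (Nat.cast_pos.2 hm).ne']
  filter_upwards [ae_restrict_mem measurableSet_Ioc] with r hr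
  have : 0 < r := ha'.trans_lt hr.1
  positivity

lemma map_pnorm_volume_posOrthant (hm : 0 < m) (hα : 0 < α) :
    (volume.restrict (posOrthant m)).map (pnorm α) =
      volume (orthantBall m α 1) • radialMeasure m := by
  refine Measure.ext_of_Ioc' _ _ (fun a b hab => ?_) (fun a b hab => ?_)
  all_goals rw [Measure.map_apply measurable_pnorm measurableSet_Ioc,
    Measure.restrict_apply' (measurableSet_posOrthant m), inter_comm,
    volume_posOrthant_inter_pnorm_preimage_Ioc hm hα hab.le]
  · exact ENNReal.mul_ne_top (volume_orthantBall_lt_top hα 1).ne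
      (ENNReal.sub_ne_top (ENNReal.pow_ne_top ENNReal.ofReal_ne_top))
  · rw [Measure.smul_apply, radialMeasure_Ioc hm hab.le, smul_eq_mul]

lemma integral_comp_pnorm_posOrthant (hm : 0 < m) (hα : 0 < α) {g : ℝ → ℝ}
    (hg : Measurable g) :
    ∫ x in posOrthant m, g (pnorm α x) =
      m * volume.real (orthantBall m α 1) * ∫ r in Ioi 0, r ^ ((m : ℝ) - 1) * g r := by
  rw [← integral_map (f := g) measurable_pnorm.aemeasurable hg.aestronglyMeasurable,
    map_pnorm_volume_posOrthant hm hα, integral_smul_measure, radialMeasure,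
    integral_withDensity_eq_integral_toReal_smul (by fun_prop)
      (ae_of_all _ fun _ => ENNReal.ofReal_lt_top), smul_eq_mul, ← measureReal_def,
    mul_comm (m : ℝ), mul_assoc]
  congr 1
  rw [← integral_const_mul]
  refine setIntegral_congr_fun measurableSet_Ioi fun r (hr : 0 < r) => ?_
  rw [ENNReal.toReal_ofReal (by positivity), smul_eq_mul, mul_assoc]

lemma natCast_mul_measureReal_orthantBall_one (hm : 0 < m) (hα : 0 < α) :
    m * volume.real (orthantBall m α 1) =
      Gamma (1 / α) ^ m / (α ^ (m - 1) * Gamma (m / α)) := by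
  have hprod : ∫ x in posOrthant m, exp (-pnorm α x ^ α) = Gamma (1 / α + 1) ^ m := by
    calc ∫ x in posOrthant m, exp (-pnorm α x ^ α)
        = ∫ x in posOrthant m, ∏ i, exp (-x i ^ α) := by
          refine setIntegral_congr_fun (measurableSet_posOrthant m) fun x hx => ?_
          rw [pnorm_rpow_self hα.ne', ← Finset.sum_neg_distrib, exp_sum]
          exact Finset.prod_congr rfl fun i _ => by rw [abs_of_pos (hx i)]
      _ = (∫ t in Ioi 0, exp (-t ^ α)) ^ m := by
          rw [posOrthant_eq_pi, volume_pi, Measure.restrict_pi_pi,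
            integral_fintype_prod_eq_pow fun t => exp (-t ^ α), Fintype.card_fin]
      _ = Gamma (1 / α + 1) ^ m := by rw [integral_exp_neg_rpow hα]
  have hradial : ∫ r in Ioi 0, r ^ ((m : ℝ) - 1) * exp (-r ^ α) = 1 / α * Gamma (m / α) := by
    have hm' : (1 : ℝ) ≤ m := Nat.one_le_cast.2 hm
    rw [integral_rpow_mul_exp_neg_rpow hα (by linarith), sub_add_cancel]
  have hpolar := integral_comp_pnorm_posOrthant hm hα (g := fun r => exp (-r ^ α)) (by fun_prop)
  rw [hprod, hradial, Gamma_add_one (one_div_pos.2 hα).ne'] at hpolar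
  have hΓ : 0 < Gamma (m / α) := Gamma_pos_of_pos (by positivity)
  have hpow : α ^ m = α ^ (m - 1) * α := by rw [← pow_succ, Nat.sub_add_cancel hm]
  rw [one_div_mul_eq_div, one_div_mul_eq_div, div_pow, hpow] at hpolar
  rw [eq_div_iff (by positivity)]
  calc _ = α ^ (m - 1) * α * (m * volume.real (orthantBall m α 1) * (Gamma (m / α) / α)) := by
        field_simp
    _ = Gamma (1 / α) ^ m := by rw [← hpolar]; field_simp

end orthant

lemma cothR_sub_one {t : ℝ} (ht : 0 < t) :
    cothR t - 1 = 2 * (exp (-(2 * t)) / (1 - exp (-(2 * t)))) := by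
  have hden : exp t - exp (-t) ≠ 0 := (sub_pos.2 (exp_lt_exp.2 (neg_lt_self ht))).ne'
  have h2 : exp (-(2 * t)) = exp (-t) * exp (-t) := by rw [← exp_add]; ring_nf
  have hfac : 1 - exp (-(2 * t)) = exp (-t) * (exp t - exp (-t)) := by
    rw [h2, mul_sub, ← exp_add, ← exp_add, neg_add_cancel, exp_zero]
  rw [cothR, hfac, h2]
  field_simp
  ring

lemma hasSum_cothR_sub_one {t : ℝ} (ht : 0 < t) :
    HasSum (fun k : ℕ+ => 2 * exp (-(2 * k * t))) (cothR t - 1) := by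
  set q := exp (-(2 * t))
  have hq0 : 0 ≤ q := (exp_pos _).le
  have hq1 : q < 1 := exp_lt_one_iff.2 (by linarith)
  have hpow : ∀ k : ℕ, exp (-(2 * k * t)) = q ^ k := fun k => by
    rw [← exp_nat_mul]; ring_nf
  rw [cothR_sub_one ht]
  refine HasSum.mul_left 2 ?_
  simp only [hpow]
  rw [hasSum_pnat_iff_hasSum_succ (f := fun k => q ^ k), div_eq_mul_inv]
  simpa only [pow_succ'] using (hasSum_geometric_of_lt_one hq0 hq1).mul_left q

lemma integral_rpow_mul_two_mul_exp_neg_two_mul {σ k : ℝ} (hσ : 0 < σ) (hk : 0 < k) :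
    ∫ t in Ioi (0 : ℝ), t ^ (σ - 1) * (2 * exp (-(2 * k * t))) =
      Gamma σ / 2 ^ (σ - 1) * k ^ (-σ) := by
  calc ∫ t in Ioi (0 : ℝ), t ^ (σ - 1) * (2 * exp (-(2 * k * t)))
      = 2 * ∫ t in Ioi (0 : ℝ), t ^ (σ - 1) * exp (-((2 * k) * t)) := by
        rw [← integral_const_mul]; congr 1; ext t; ring
    _ = 2 * ((1 / (2 * k)) ^ σ * Gamma σ) := by
        rw [integral_rpow_mul_exp_neg_mul_Ioi hσ (by positivity)]
    _ = Gamma σ / 2 ^ (σ - 1) * k ^ (-σ) := by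
        rw [one_div, inv_rpow (by positivity), mul_rpow zero_le_two hk.le, rpow_neg hk.le,
          rpow_sub_one two_ne_zero]
        field_simp

lemma integral_rpow_mul_cothR_sub_one {σ : ℝ} (hσ : 1 < σ) :
    ∫ t in Ioi (0 : ℝ), t ^ (σ - 1) * (cothR t - 1) = Gamma σ / 2 ^ (σ - 1) * zetaR σ := by
  have hF : ∀ k : ℕ+,
      IntegrableOn (fun t : ℝ => t ^ (σ - 1) * (2 * exp (-(2 * k * t)))) (Ioi 0) := fun k => by
    have := (integrableOn_rpow_mul_exp_neg_mul_rpow (by linarith : -1 < σ - 1) one_pos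
      (by positivity : (0 : ℝ) < 2 * k)).const_mul 2
    refine IntegrableOn.congr_fun this (fun t _ => ?_) measurableSet_Ioi
    simp only [rpow_one, neg_mul]; ring
  have hnorm : ∀ k : ℕ+, ∫ t in Ioi (0 : ℝ), ‖t ^ (σ - 1) * (2 * exp (-(2 * k * t)))‖ =
      Gamma σ / 2 ^ (σ - 1) * (k : ℝ) ^ (-σ) := fun k => by
    rw [← integral_rpow_mul_two_mul_exp_neg_two_mul (by linarith) (by positivity)]
    refine setIntegral_congr_fun measurableSet_Ioi fun t (ht : 0 < t) => ?_
    exact norm_of_nonneg (by positivity)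
  have hzeta : Summable fun k : ℕ+ => (k : ℝ) ^ (-σ) :=
    (summable_nat_rpow.2 (by linarith)).comp_injective PNat.coe_injective
  rw [zetaR, ← tsum_mul_left, ← tsum_congr fun k : ℕ+ =>
    integral_rpow_mul_two_mul_exp_neg_two_mul (by linarith) (by positivity),
    integral_tsum_of_summable_integral_norm hF (by simpa only [hnorm] using hzeta.mul_left _)]
  refine setIntegral_congr_fun measurableSet_Ioi fun t ht => ?_
  exact (((hasSum_cothR_sub_one ht).mul_left (t ^ (σ - 1))).tsum_eq).symm

lemma integral_rpow_mul_cothR_div_sub_one {C σ : ℝ} (hC : 0 < C) (hσ : 1 < σ) :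
    ∫ r in Ioi 0, r ^ (σ - 1) * (cothR (r / C) - 1) =
      C ^ σ * (Gamma σ / 2 ^ (σ - 1) * zetaR σ) := by
  calc ∫ r in Ioi 0, r ^ (σ - 1) * (cothR (r / C) - 1)
      = ∫ r in Ioi 0, C ^ (σ - 1) * ((C⁻¹ * r) ^ (σ - 1) * (cothR (C⁻¹ * r) - 1)) := by
        refine setIntegral_congr_fun measurableSet_Ioi fun r (hr : 0 < r) => ?_
        rw [inv_mul_eq_div, div_rpow hr.le hC.le]
        field_simp
    _ = C ^ (σ - 1) * (C * (Gamma σ / 2 ^ (σ - 1) * zetaR σ)) := by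
        rw [integral_const_mul, integral_comp_mul_left_Ioi (fun t => t ^ (σ - 1) * (cothR t - 1))
          0 (inv_pos.2 hC), mul_zero, inv_inv, smul_eq_mul, integral_rpow_mul_cothR_sub_one hσ]
    _ = C ^ σ * (Gamma σ / 2 ^ (σ - 1) * zetaR σ) := by
        rw [← mul_assoc, ← rpow_add_one hC.ne', sub_add_cancel]

theorem stmt_8_general (m n : ℕ) (hm : 0 < m) (hn : 0 < n) (α β σ : ℝ)
    (hα : 0 < α) (hσ : 1 < σ)
    (y : Fin n → ℝ) (hy : ∀ i, 0 < y i) :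
    pnorm β y ^ (-σ) *
        ∫ x in {x : Fin m → ℝ | ∀ i, 0 < x i},
          (cothR (pnorm α x / pnorm β y) - 1) * pnorm α x ^ (σ - m) =
      Real.Gamma (1 / α) ^ m / (α ^ (m - 1) * Real.Gamma (m / α)) *
        (Real.Gamma σ / 2 ^ (σ - 1)) * zetaR σ := by
  set C := pnorm β y
  have hC : 0 < C := pnorm_pos fun h => (hy ⟨0, hn⟩).ne' (congrFun h _)
  have hg : Measurable fun r => (cothR (r / C) - 1) * r ^ (σ - m) := by
    unfold cothR; fun_prop
  have hradial : ∫ r in Ioi 0, r ^ ((m : ℝ) - 1) * ((cothR (r / C) - 1) * r ^ (σ - m)) =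
      ∫ r in Ioi 0, r ^ (σ - 1) * (cothR (r / C) - 1) :=
    setIntegral_congr_fun measurableSet_Ioi fun r (hr : 0 < r) => by
      rw [mul_left_comm, ← rpow_add hr, sub_add_sub_cancel', mul_comm]
  rw [show {x : Fin m → ℝ | ∀ i, 0 < x i} = posOrthant m from rfl,
    integral_comp_pnorm_posOrthant hm hα hg, natCast_mul_measureReal_orthantBall_one hm hα,
    hradial, integral_rpow_mul_cothR_div_sub_one hC hσ, rpow_neg hC.le]
  field_simp

theorem stmt_8 (m n : ℕ) (hm : 0 < m) (hn : 0 < n) (α β σ : ℝ)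
    (hα : 0 < α) (hβ : 0 < β) (hσ : 1 < σ)
    (y : Fin n → ℝ) (hy : ∀ i, 0 < y i) :
    pnorm β y ^ (-σ) *
        ∫ x in {x : Fin m → ℝ | ∀ i, 0 < x i},
          (cothR (pnorm α x / pnorm β y) - 1) * pnorm α x ^ (σ - m) =
      Real.Gamma (1 / α) ^ m / (α ^ (m - 1) * Real.Gamma (m / α)) *
        (Real.Gamma σ / 2 ^ (σ - 1)) * zetaR σ :=
  stmt_8_general m n hm hn α β σ hα hσ y hy
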